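/- Let ξ_n > 0 and η_n > 0 be sequences with sup_n ξ_n²/n < ∞, let k_n be integers with 1 ≤ k_n < n, and fix σ ∈ (0,∞). Then p̃_n(θ, σ) → 0 as n → ∞ for every θ ∈ ℝ with θ ≠ 0 if and only if ξ_n η_n → 0 as n → ∞. -/

import Mathlib

open MeasureTheory ProbabilityTheory Filter Set

/-- Standard normal cdf. -/
noncomputable def Phi (x : ℝ) : ℝ :=
  ∫ t in Iic x, (Real.sqrt (2 * Real.pi))⁻¹ * Real.exp (-t ^ 2 / 2)

/-- Standard normal pdf. -/
noncomputable def stdPhi (t : ℝ) : ℝ :=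
  (Real.sqrt (2 * Real.pi))⁻¹ * Real.exp (-t ^ 2 / 2)

/-- Extension of `Phi` to the extended reals, with `PhiE ⊤ = 1` and `PhiE ⊥ = 0`. -/
noncomputable def PhiE (z : EReal) : ℝ :=
  if z = ⊤ then 1 else if z = ⊥ then 0 else Phi z.toReal

/-- Density of `m^{-1/2}` times the square root of a chi-square with `m` degrees of freedom. -/
noncomputable def rho (m : ℕ) (s : ℝ) : ℝ :=
  if 0 < s then
    (2 : ℝ) ^ ((1 : ℝ) - (m : ℝ) / 2) * (Real.Gamma ((m : ℝ) / 2))⁻¹ * Real.sqrt m *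
      ((m : ℝ) * s ^ 2) ^ (((m : ℝ) - 1) / 2) * Real.exp (-(m : ℝ) * s ^ 2 / 2)
  else 0

/-- Unknown-variance variable deletion probability with `m` degrees of freedom. -/
noncomputable def ptdel (n m : ℕ) (ξ η θ σ : ℝ) : ℝ :=
  ∫ s in Ioi (0 : ℝ),
    (Phi (Real.sqrt n * (-θ / (σ * ξ) + s * η)) -
      Phi (Real.sqrt n * (-θ / (σ * ξ) - s * η))) * rho m s

/-!
With `a = θ / (σ ξ)`, the integrand of `ptdel` is the standard normal mass of the band
`[√n (-a - s η), √n (-a + s η)]`.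

If `ξ η → 0`: when `s η ≤ a / 2` the band has width `2 √n s η` and lies left of `-√n a / 2`,
where the density is at most `φ(√n a / 2)`; since `t φ(t) ≤ 1/2` its mass is at most `2 s η / a`,
a bound which exceeds `1` for larger `s`. Averaging against `ρ_m` with `2 s ≤ 1 + s²` and
`∫ ρ_m = ∫ s² ρ_m = 1` gives `ptdel ≤ 2 σ ξ η / |θ|`.

If `ξ η ≥ ε` infinitely often, take `θ = σ ε / 8`: for `s ≥ 1/4` the band contains
`[0, √n a]`, and `√n a ≥ θ / (σ √C)` because `ξ² ≤ C n`. By Paley–Zygmund (second moment `1`,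
fourth moment `(m + 2) / m ≤ 3`), `ρ_m` gives mass at least `9/128` to `[1/4, ∞)` for every `m`,
so `ptdel` stays bounded away from `0` along these `n`.
-/

open Topology

lemma stdPhi_pos (t : ℝ) : 0 < stdPhi t := by
  unfold stdPhi; positivity

lemma stdPhi_le_stdPhi_of_sq_le {s t : ℝ} (h : s ^ 2 ≤ t ^ 2) : stdPhi t ≤ stdPhi s := by
  unfold stdPhi; gcongr

lemma stdPhi_neg (t : ℝ) : stdPhi (-t) = stdPhi t := by
  simp [stdPhi]

lemma mul_stdPhi_le_half (t : ℝ) : t * stdPhi t ≤ 1 / 2 := by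
  have hexp : t ≤ Real.exp (t ^ 2 / 2) := by
    nlinarith [Real.add_one_le_exp (t ^ 2 / 2), sq_nonneg (t - 1)]
  have hsqrt : 2 ≤ Real.sqrt (2 * Real.pi) :=
    Real.le_sqrt_of_sq_le (by nlinarith [Real.pi_gt_three])
  have h1 : t * Real.exp (-t ^ 2 / 2) ≤ 1 := by
    rw [neg_div, Real.exp_neg, ← div_eq_mul_inv, div_le_one (Real.exp_pos _)]
    exact hexp
  calc t * stdPhi t = (Real.sqrt (2 * Real.pi))⁻¹ * (t * Real.exp (-t ^ 2 / 2)) := by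
        unfold stdPhi; ring
    _ ≤ (Real.sqrt (2 * Real.pi))⁻¹ * 1 := by gcongr
    _ ≤ 1 / 2 := by rw [mul_one, one_div]; gcongr

lemma stdPhi_eq (t : ℝ) :
    stdPhi t = (Real.sqrt (2 * Real.pi))⁻¹ * Real.exp (-2⁻¹ * t ^ 2) := by
  rw [stdPhi, neg_div, div_eq_inv_mul, neg_mul]

lemma integrable_stdPhi : Integrable stdPhi := by
  simpa only [← stdPhi_eq] using
    (integrable_exp_neg_mul_sq (by norm_num : (0 : ℝ) < 2⁻¹)).const_mul (Real.sqrt (2 * Real.pi))⁻¹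

lemma integral_stdPhi : ∫ t, stdPhi t = 1 := by
  simp only [stdPhi_eq, integral_const_mul, integral_gaussian]
  rw [div_inv_eq_mul, mul_comm Real.pi]
  exact inv_mul_cancel₀ (by positivity)

lemma Phi_eq_integral (x : ℝ) : Phi x = ∫ t in Iic x, stdPhi t := rfl

lemma Phi_mono : Monotone Phi := fun _ _ hab =>
  setIntegral_mono_set integrable_stdPhi.integrableOn
    (.of_forall fun t => (stdPhi_pos t).le) (Iic_subset_Iic.2 hab).eventuallyLE

lemma measurable_Phi : Measurable Phi := Phi_mono.measurable

lemma Phi_nonneg (x : ℝ) : 0 ≤ Phi x :=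
  setIntegral_nonneg measurableSet_Iic fun t _ => (stdPhi_pos t).le

lemma Phi_le_one (x : ℝ) : Phi x ≤ 1 := by
  rw [Phi_eq_integral, ← integral_stdPhi]
  exact setIntegral_le_integral integrable_stdPhi (.of_forall fun t => (stdPhi_pos t).le)

lemma Phi_sub_Phi_eq_intervalIntegral (a b : ℝ) : Phi b - Phi a = ∫ t in a..b, stdPhi t := by
  rw [Phi_eq_integral, Phi_eq_integral, intervalIntegral.integral_Iic_sub_Iic
    integrable_stdPhi.integrableOn integrable_stdPhi.integrableOn]

lemma Phi_neg (x : ℝ) : Phi (-x) = 1 - Phi x := by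
  have h := intervalIntegral.integral_Iic_add_Ioi (b := x) integrable_stdPhi.integrableOn
    integrable_stdPhi.integrableOn
  rw [integral_stdPhi, ← Phi_eq_integral] at h
  rw [Phi_eq_integral, ← integral_comp_neg_Ioi]
  simp only [stdPhi_neg]
  linarith

lemma Phi_zero : Phi 0 = 1 / 2 := by
  linarith [neg_zero (G := ℝ) ▸ Phi_neg 0]

lemma Phi_sub_Phi_le_mul_stdPhi {a b c : ℝ} (hab : a ≤ b) (hbc : b ≤ -c) (hc : 0 ≤ c) :
    Phi b - Phi a ≤ (b - a) * stdPhi c := by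
  rw [Phi_sub_Phi_eq_intervalIntegral, ← smul_eq_mul, ← intervalIntegral.integral_const]
  refine intervalIntegral.integral_mono_on hab integrable_stdPhi.intervalIntegrable
    intervalIntegrable_const fun t ht => stdPhi_le_stdPhi_of_sq_le ?_
  nlinarith [ht.1, ht.2]

lemma mul_stdPhi_le_Phi_sub_Phi {a b : ℝ} (ha : 0 ≤ a) (hab : a ≤ b) :
    (b - a) * stdPhi b ≤ Phi b - Phi a := by
  rw [Phi_sub_Phi_eq_intervalIntegral, ← smul_eq_mul, ← intervalIntegral.integral_const]
  refine intervalIntegral.integral_mono_on hab intervalIntegrable_const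
    integrable_stdPhi.intervalIntegrable fun t ht => stdPhi_le_stdPhi_of_sq_le ?_
  nlinarith [ht.1, ht.2]

lemma half_lt_Phi {x : ℝ} (hx : 0 < x) : 1 / 2 < Phi x := by
  have := mul_stdPhi_le_Phi_sub_Phi le_rfl hx.le
  rw [Phi_zero] at this
  nlinarith [stdPhi_pos x]

lemma half_le_Phi {x : ℝ} (hx : 0 ≤ x) : 1 / 2 ≤ Phi x :=
  Phi_zero ▸ Phi_mono hx

lemma rho_nonneg (m : ℕ) (s : ℝ) : 0 ≤ rho m s := by
  unfold rho
  split_ifs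
  · have := Real.Gamma_nonneg_of_nonneg (s := (m : ℝ) / 2) (by positivity)
    positivity
  · exact le_rfl

lemma rho_eq_of_pos {m : ℕ} (hm : 0 < m) {s : ℝ} (hs : 0 < s) :
    rho m s = 2 * ((m : ℝ) / 2) ^ ((m : ℝ) / 2) / Real.Gamma ((m : ℝ) / 2) *
      (s ^ ((m : ℝ) - 1) * Real.exp (-((m : ℝ) / 2) * s ^ 2)) := by
  have hm' : (0 : ℝ) < m := by exact_mod_cast hm
  have hpow : ((m : ℝ) * s ^ 2) ^ (((m : ℝ) - 1) / 2) =
      (m : ℝ) ^ (((m : ℝ) - 1) / 2) * s ^ ((m : ℝ) - 1) := by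
    rw [Real.mul_rpow hm'.le (by positivity), ← Real.rpow_natCast, ← Real.rpow_mul hs.le]
    norm_num [mul_div_cancel₀]
  have hsqrt : Real.sqrt m * (m : ℝ) ^ (((m : ℝ) - 1) / 2) = (m : ℝ) ^ ((m : ℝ) / 2) := by
    rw [Real.sqrt_eq_rpow, ← Real.rpow_add hm']
    ring_nf
  have htwo : (2 : ℝ) ^ ((1 : ℝ) - (m : ℝ) / 2) * (m : ℝ) ^ ((m : ℝ) / 2) =
      2 * ((m : ℝ) / 2) ^ ((m : ℝ) / 2) := by
    rw [Real.rpow_sub two_pos, Real.rpow_one, Real.div_rpow hm'.le zero_le_two]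
    ring
  rw [rho, if_pos hs, hpow, show -(m : ℝ) * s ^ 2 / 2 = -((m : ℝ) / 2) * s ^ 2 by ring]
  linear_combination (Real.Gamma ((m : ℝ) / 2))⁻¹ * s ^ ((m : ℝ) - 1) *
    Real.exp (-((m : ℝ) / 2) * s ^ 2) * ((2 : ℝ) ^ ((1 : ℝ) - (m : ℝ) / 2) * hsqrt + htwo)

lemma integrableOn_rpow_mul_rho {m : ℕ} (hm : 0 < m) {r : ℝ} (hr : -m < r) :
    IntegrableOn (fun s => s ^ r * rho m s) (Ioi 0) := by
  have hm' : (0 : ℝ) < m := by exact_mod_cast hm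
  refine IntegrableOn.congr_fun ((integrableOn_rpow_mul_exp_neg_mul_sq (half_pos hm')
    (s := r + ((m : ℝ) - 1)) (by linarith)).const_mul
    (2 * ((m : ℝ) / 2) ^ ((m : ℝ) / 2) / Real.Gamma ((m : ℝ) / 2))) (fun s hs => ?_)
    measurableSet_Ioi
  rw [rho_eq_of_pos hm hs, Real.rpow_add hs]
  ring

lemma integral_rpow_mul_rho {m : ℕ} (hm : 0 < m) {r : ℝ} (hr : -m < r) :
    ∫ s in Ioi 0, s ^ r * rho m s =
      ((m : ℝ) / 2) ^ (-(r / 2)) * Real.Gamma (((m : ℝ) + r) / 2) / Real.Gamma ((m : ℝ) / 2) := by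
  have hm' : (0 : ℝ) < m := by exact_mod_cast hm
  have hpow : ((m : ℝ) / 2) ^ ((m : ℝ) / 2) * ((m : ℝ) / 2) ^ (-((m + r) / 2)) =
      ((m : ℝ) / 2) ^ (-(r / 2)) := by
    rw [← Real.rpow_add (by positivity)]
    ring_nf
  calc ∫ s in Ioi 0, s ^ r * rho m s
      = 2 * ((m : ℝ) / 2) ^ ((m : ℝ) / 2) / Real.Gamma ((m : ℝ) / 2) *
          ∫ s in Ioi 0, s ^ (r + ((m : ℝ) - 1)) * Real.exp (-((m : ℝ) / 2) * s ^ (2 : ℝ)) := by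
        rw [← integral_const_mul]
        refine setIntegral_congr_fun measurableSet_Ioi fun s hs => ?_
        rw [rho_eq_of_pos hm hs, Real.rpow_add hs, Real.rpow_two]
        ring
    _ = _ := by
        rw [integral_rpow_mul_exp_neg_mul_rpow two_pos (by linarith) (half_pos hm'),
          show r + ((m : ℝ) - 1) + 1 = (m : ℝ) + r by ring]
        field_simp
        linear_combination Real.Gamma (((m : ℝ) + r) / 2) * hpow

lemma integrableOn_pow_mul_rho {m : ℕ} (hm : 0 < m) (k : ℕ) :
    IntegrableOn (fun s => s ^ k * rho m s) (Ioi 0) := by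
  simpa only [Real.rpow_natCast] using
    integrableOn_rpow_mul_rho hm (r := k)
      ((neg_neg_of_pos (Nat.cast_pos.2 hm)).trans_le k.cast_nonneg)

lemma integral_pow_mul_rho {m : ℕ} (hm : 0 < m) (k : ℕ) :
    ∫ s in Ioi 0, s ^ k * rho m s =
      ((m : ℝ) / 2) ^ (-((k : ℝ) / 2)) * Real.Gamma (((m : ℝ) + k) / 2) /
        Real.Gamma ((m : ℝ) / 2) := by
  simpa only [Real.rpow_natCast] using
    integral_rpow_mul_rho hm (r := k)
      ((neg_neg_of_pos (Nat.cast_pos.2 hm)).trans_le k.cast_nonneg)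

lemma integrableOn_rho {m : ℕ} (hm : 0 < m) : IntegrableOn (rho m) (Ioi 0) := by
  simpa using integrableOn_pow_mul_rho hm 0

lemma integral_rho {m : ℕ} (hm : 0 < m) : ∫ s in Ioi 0, rho m s = 1 := by
  have hΓ : 0 < Real.Gamma ((m : ℝ) / 2) := Real.Gamma_pos_of_pos (by positivity)
  simpa [hΓ.ne'] using integral_pow_mul_rho hm 0

lemma integral_sq_mul_rho {m : ℕ} (hm : 0 < m) : ∫ s in Ioi 0, s ^ 2 * rho m s = 1 := by
  have hm' : (0 : ℝ) < m / 2 := by positivity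
  rw [integral_pow_mul_rho hm, show ((m : ℝ) + (2 : ℕ)) / 2 = m / 2 + 1 by push_cast; ring,
    Real.Gamma_add_one hm'.ne']
  norm_num [Real.rpow_neg_one]
  field_simp

lemma integral_pow_four_mul_rho {m : ℕ} (hm : 0 < m) :
    ∫ s in Ioi 0, s ^ 4 * rho m s = ((m : ℝ) + 2) / m := by
  have hm' : (0 : ℝ) < m / 2 := by positivity
  rw [integral_pow_mul_rho hm, show ((m : ℝ) + (4 : ℕ)) / 2 = m / 2 + 1 + 1 by push_cast; ring,
    Real.Gamma_add_one (by positivity), Real.Gamma_add_one hm'.ne']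
  field_simp
  norm_num [Real.rpow_neg, Real.rpow_two]
  field_simp
  ring

lemma nine_div_128_le_setIntegral_Ici_rho {m : ℕ} (hm : 0 < m) :
    9 / 128 ≤ ∫ s in Ici (1 / 4), rho m s := by
  have h4 : ∫ s in Ioi 0, s ^ 4 * rho m s ≤ 3 := by
    have : (1 : ℝ) ≤ m := by exact_mod_cast hm
    rw [integral_pow_four_mul_rho hm, div_le_iff₀ (by positivity)]
    linarith
  have hind : ∫ s in Ioi 0, (Ici (1 / 4 : ℝ)).indicator (rho m) s =
      ∫ s in Ici (1 / 4), rho m s := by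
    rw [integral_indicator measurableSet_Ici, Measure.restrict_restrict measurableSet_Ici,
      inter_eq_left.2 (Ici_subset_Ioi.2 (by norm_num))]
  have hρ := integrableOn_rho hm
  have h4i := (integrableOn_pow_mul_rho hm 4).const_mul (1 / 8)
  have hii := (hρ.indicator (measurableSet_Ici (a := (1 / 4 : ℝ)))).const_mul 8
  -- Paley–Zygmund: `s² ≤ 1/16` below `1/4`, and `s² ≤ 8 + s⁴/8` everywhere.
  have hbound : ∫ s in Ioi 0, s ^ 2 * rho m s ≤ ∫ s in Ioi 0,
      (1 / 16 * rho m s + 1 / 8 * (s ^ 4 * rho m s) +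
        8 * (Ici (1 / 4 : ℝ)).indicator (rho m) s) := by
    refine setIntegral_mono_on (integrableOn_pow_mul_rho hm 2) (((hρ.const_mul _).add h4i).add hii)
      measurableSet_Ioi fun s hs0 => ?_
    have hρs := rho_nonneg m s
    by_cases hs : s ∈ Ici (1 / 4 : ℝ)
    · rw [indicator_of_mem hs]
      nlinarith [mul_nonneg (sq_nonneg (s ^ 2 - 4)) hρs,
        mul_nonneg (pow_nonneg (sq_nonneg s) 2) hρs]
    · rw [indicator_of_notMem hs]
      have h16 : 0 ≤ 1 / 16 - s ^ 2 := by nlinarith [not_le.1 (mem_Ici.not.1 hs), mem_Ioi.1 hs0]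
      nlinarith [mul_nonneg h16 hρs, mul_nonneg (pow_nonneg (sq_nonneg s) 2) hρs]
  rw [integral_add (by exact (hρ.const_mul _).add h4i) hii, integral_add (hρ.const_mul _) h4i,
    integral_const_mul, integral_const_mul, integral_const_mul, hind, integral_rho hm,
    integral_sq_mul_rho hm] at hbound
  linarith

noncomputable def bandProb (u a b : ℝ) : ℝ :=
  Phi (u * (-a + b)) - Phi (u * (-a - b))

lemma bandProb_nonneg {u b : ℝ} (hu : 0 ≤ u) (hb : 0 ≤ b) (a : ℝ) : 0 ≤ bandProb u a b :=
  sub_nonneg.2 (Phi_mono (mul_le_mul_of_nonneg_left (by linarith) hu))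

lemma bandProb_le_one (u a b : ℝ) : bandProb u a b ≤ 1 := by
  rw [bandProb]
  linarith [Phi_le_one (u * (-a + b)), Phi_nonneg (u * (-a - b))]

lemma abs_bandProb_le_one {u b : ℝ} (hu : 0 ≤ u) (hb : 0 ≤ b) (a : ℝ) : |bandProb u a b| ≤ 1 :=
  abs_le.2 ⟨by linarith [bandProb_nonneg hu hb a], bandProb_le_one u a b⟩

lemma bandProb_neg (u a b : ℝ) : bandProb u (-a) b = bandProb u a b := by
  rw [bandProb, bandProb, show u * (- -a + b) = -(u * (-a - b)) by ring,
    show u * (- -a - b) = -(u * (-a + b)) by ring, Phi_neg, Phi_neg]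
  ring

lemma measurable_bandProb (u a : ℝ) : Measurable (bandProb u a) :=
  (measurable_Phi.comp (by fun_prop)).sub (measurable_Phi.comp (by fun_prop))

lemma bandProb_le {u a b : ℝ} (hu : 0 ≤ u) (ha : 0 < a) (hb : 0 ≤ b) :
    bandProb u a b ≤ 2 * b / a := by
  rcases le_or_gt b (a / 2) with hba | hba
  · -- the band lies to the left of `-u a / 2`, where the density is at most `stdPhi (u a / 2)`
    have hband : bandProb u a b ≤ 2 * b * (u * stdPhi (u * a / 2)) :=
      (Phi_sub_Phi_le_mul_stdPhi (c := u * a / 2) (by nlinarith) (by nlinarith)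
        (by positivity)).trans_eq (by ring)
    have hpeak : u * stdPhi (u * a / 2) ≤ 1 / a := by
      rw [le_div_iff₀ ha]
      linarith [mul_stdPhi_le_half (u * a / 2)]
    calc bandProb u a b ≤ 2 * b * (1 / a) := hband.trans (by gcongr)
      _ = 2 * b / a := by ring
  · calc bandProb u a b ≤ 1 := bandProb_le_one u a b
      _ ≤ 2 * b / a := by rw [le_div_iff₀ ha]; linarith

lemma Phi_sub_half_le_bandProb {u a b : ℝ} (hu : 0 ≤ u) (ha : 0 ≤ a) (hab : 2 * a ≤ b) :
    Phi (u * a) - 1 / 2 ≤ bandProb u a b := by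
  have hupper := Phi_mono (mul_le_mul_of_nonneg_left (by linarith : a ≤ -a + b) hu)
  have hlower := Phi_mono (mul_nonpos_of_nonneg_of_nonpos hu (by linarith : -a - b ≤ 0))
  rw [Phi_zero] at hlower
  rw [bandProb]
  linarith

lemma ptdel_eq_integral_bandProb (n m : ℕ) (ξ η θ σ : ℝ) :
    ptdel n m ξ η θ σ = ∫ s in Ioi 0, bandProb (Real.sqrt n) (θ / (σ * ξ)) (s * η) * rho m s := by
  simp only [ptdel, bandProb, neg_div]

lemma integrableOn_bandProb_mul_rho {m : ℕ} (hm : 0 < m) {u η : ℝ} (hu : 0 ≤ u) (hη : 0 ≤ η)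
    (a : ℝ) : IntegrableOn (fun s => bandProb u a (s * η) * rho m s) (Ioi 0) :=
  (integrableOn_rho hm).bdd_mul
    ((measurable_bandProb u a).comp (measurable_id.mul_const η)).aestronglyMeasurable
    ((ae_restrict_iff' measurableSet_Ioi).2 (.of_forall fun _ hs =>
      abs_bandProb_le_one hu (mul_nonneg hs.le hη) a))

lemma bandProb_mul_rho_nonneg {u η : ℝ} (hu : 0 ≤ u) (hη : 0 ≤ η) (a : ℝ) (m : ℕ) {s : ℝ}
    (hs : 0 < s) : 0 ≤ bandProb u a (s * η) * rho m s :=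
  mul_nonneg (bandProb_nonneg hu (mul_nonneg hs.le hη) a) (rho_nonneg m s)

lemma ptdel_nonneg (n m : ℕ) (ξ : ℝ) {η : ℝ} (hη : 0 ≤ η) (θ σ : ℝ) : 0 ≤ ptdel n m ξ η θ σ := by
  rw [ptdel_eq_integral_bandProb]
  exact setIntegral_nonneg measurableSet_Ioi fun _ hs =>
    bandProb_mul_rho_nonneg (Real.sqrt_nonneg _) hη _ m hs

lemma ptdel_abs (n m : ℕ) (ξ η θ σ : ℝ) : ptdel n m ξ η |θ| σ = ptdel n m ξ η θ σ := by
  rcases abs_choice θ with h | h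
  · rw [h]
  · simp only [ptdel_eq_integral_bandProb, h, neg_div, bandProb_neg]

lemma ptdel_le {m : ℕ} (hm : 0 < m) (n : ℕ) {ξ η θ σ : ℝ} (hξ : 0 < ξ) (hη : 0 ≤ η) (hθ : 0 < θ)
    (hσ : 0 < σ) : ptdel n m ξ η θ σ ≤ 2 * σ / θ * (ξ * η) := by
  have ha : 0 < θ / (σ * ξ) := by positivity
  rw [ptdel_eq_integral_bandProb]
  calc ∫ s in Ioi 0, bandProb (Real.sqrt n) (θ / (σ * ξ)) (s * η) * rho m s
      ≤ ∫ s in Ioi 0, σ / θ * (ξ * η) * (rho m s + s ^ 2 * rho m s) := by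
        refine setIntegral_mono_on (integrableOn_bandProb_mul_rho hm (Real.sqrt_nonneg _) hη _)
          (((integrableOn_rho hm).add (integrableOn_pow_mul_rho hm 2)).const_mul _)
          measurableSet_Ioi fun s hs => ?_
        have hsη : 0 ≤ s * η := mul_nonneg hs.le hη
        have hband := bandProb_le (Real.sqrt_nonneg n) ha hsη
        have hquad : 2 * (s * η) * (σ * ξ) / θ ≤ σ / θ * (ξ * η) * (1 + s ^ 2) := by
          rw [show 2 * (s * η) * (σ * ξ) / θ = σ / θ * (ξ * η) * (2 * s) by ring]
          gcongr
          nlinarith [sq_nonneg (s - 1)]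
        rw [div_div_eq_mul_div] at hband
        calc bandProb (Real.sqrt n) (θ / (σ * ξ)) (s * η) * rho m s
            ≤ σ / θ * (ξ * η) * (1 + s ^ 2) * rho m s :=
              mul_le_mul_of_nonneg_right (hband.trans hquad) (rho_nonneg m s)
          _ = σ / θ * (ξ * η) * (rho m s + s ^ 2 * rho m s) := by ring
    _ = 2 * σ / θ * (ξ * η) := by
        rw [integral_const_mul, integral_add (integrableOn_rho hm) (integrableOn_pow_mul_rho hm 2),
          integral_rho hm, integral_sq_mul_rho hm]
        ring

lemma le_ptdel {m : ℕ} (hm : 0 < m) (n : ℕ) {ξ η θ σ : ℝ} (hξ : 0 < ξ) (hη : 0 ≤ η) (hθ : 0 ≤ θ)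
    (hσ : 0 < σ) (hξη : 8 * θ ≤ σ * (ξ * η)) :
    9 / 128 * (Phi (Real.sqrt n * (θ / (σ * ξ))) - 1 / 2) ≤ ptdel n m ξ η θ σ := by
  have ha : 0 ≤ θ / (σ * ξ) := by positivity
  have hPhi : 0 ≤ Phi (Real.sqrt n * (θ / (σ * ξ))) - 1 / 2 :=
    sub_nonneg.2 (half_le_Phi (by positivity))
  have hsub : Ici (1 / 4 : ℝ) ⊆ Ioi 0 := Ici_subset_Ioi.2 (by norm_num)
  rw [ptdel_eq_integral_bandProb]
  calc 9 / 128 * (Phi (Real.sqrt n * (θ / (σ * ξ))) - 1 / 2)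
      ≤ ∫ s in Ici (1 / 4), (Phi (Real.sqrt n * (θ / (σ * ξ))) - 1 / 2) * rho m s := by
        rw [integral_const_mul, mul_comm]
        exact mul_le_mul_of_nonneg_left (nine_div_128_le_setIntegral_Ici_rho hm) hPhi
    _ ≤ ∫ s in Ici (1 / 4), bandProb (Real.sqrt n) (θ / (σ * ξ)) (s * η) * rho m s := by
        refine setIntegral_mono_on (((integrableOn_rho hm).mono_set hsub).const_mul _)
          ((integrableOn_bandProb_mul_rho hm (Real.sqrt_nonneg _) hη _).mono_set hsub)
          measurableSet_Ici fun s hs => mul_le_mul_of_nonneg_right ?_ (rho_nonneg m s)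
        refine Phi_sub_half_le_bandProb (Real.sqrt_nonneg _) ha ?_
        rw [← mul_div_assoc, div_le_iff₀ (by positivity)]
        nlinarith [mul_le_mul_of_nonneg_right (mem_Ici.1 hs) (by positivity : 0 ≤ η * (σ * ξ))]
    _ ≤ ∫ s in Ioi 0, bandProb (Real.sqrt n) (θ / (σ * ξ)) (s * η) * rho m s :=
        setIntegral_mono_set (integrableOn_bandProb_mul_rho hm (Real.sqrt_nonneg _) hη _)
          ((ae_restrict_iff' measurableSet_Ioi).2 (.of_forall fun _ hs =>
            bandProb_mul_rho_nonneg (Real.sqrt_nonneg _) hη _ m hs))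
          hsub.eventuallyLE

lemma le_ptdel_of_sq_div_le {m : ℕ} (hm : 0 < m) {n : ℕ} (hn : 0 < n) {ξ η θ σ C : ℝ}
    (hξ : 0 < ξ) (hη : 0 ≤ η) (hθ : 0 ≤ θ) (hσ : 0 < σ) (hC : ξ ^ 2 / n ≤ C)
    (hξη : 8 * θ ≤ σ * (ξ * η)) :
    9 / 128 * (Phi (θ / (σ * Real.sqrt C)) - 1 / 2) ≤ ptdel n m ξ η θ σ := by
  have hC0 : 0 < C := (by positivity : 0 < ξ ^ 2 / n).trans_le hC
  have hξn : ξ ≤ Real.sqrt C * Real.sqrt n := by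
    rw [← Real.sqrt_mul hC0.le]
    exact Real.le_sqrt_of_sq_le ((div_le_iff₀ (by positivity)).1 hC)
  have hΦ : θ / (σ * Real.sqrt C) ≤ Real.sqrt n * (θ / (σ * ξ)) :=
    calc θ / (σ * Real.sqrt C) = Real.sqrt n * (θ / (σ * (Real.sqrt C * Real.sqrt n))) := by
          field_simp
      _ ≤ Real.sqrt n * (θ / (σ * ξ)) := by gcongr
  have := le_ptdel hm n hξ hη hθ hσ hξη
  linarith [Phi_mono hΦ]

lemma tendsto_ptdel_of_tendsto_mul {ξ η : ℕ → ℝ} {m : ℕ → ℕ} (hξ : ∀ n, 0 < ξ n)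
    (hη : ∀ n, 0 ≤ η n) (hm : ∀ᶠ n in atTop, 0 < m n) {θ σ : ℝ} (hθ : θ ≠ 0) (hσ : 0 < σ)
    (hξη : Tendsto (fun n => ξ n * η n) atTop (𝓝 0)) :
    Tendsto (fun n => ptdel n (m n) (ξ n) (η n) θ σ) atTop (𝓝 0) := by
  simp_rw [← ptdel_abs _ _ _ _ θ]
  refine squeeze_zero' (.of_forall fun n => ptdel_nonneg _ _ _ (hη n) _ _)
    (hm.mono fun n hmn => ptdel_le hmn n (hξ n) (hη n) (abs_pos.2 hθ) hσ) ?_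
  simpa using hξη.const_mul (2 * σ / |θ|)

lemma tendsto_mul_of_tendsto_ptdel {ξ η : ℕ → ℝ} {m : ℕ → ℕ} (hξ : ∀ n, 0 < ξ n)
    (hη : ∀ n, 0 < η n) {C : ℝ} (hC : ∀ n : ℕ, ξ n ^ 2 / n ≤ C) (hm : ∀ᶠ n in atTop, 0 < m n)
    {σ : ℝ} (hσ : 0 < σ)
    (h : ∀ θ : ℝ, θ ≠ 0 → Tendsto (fun n => ptdel n (m n) (ξ n) (η n) θ σ) atTop (𝓝 0)) :
    Tendsto (fun n => ξ n * η n) atTop (𝓝 0) := by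
  refine Metric.tendsto_nhds.2 fun ε hε => ?_
  have hC0 : 0 < C := (div_pos (pow_pos (hξ 1) 2) (by norm_num)).trans_le (hC 1)
  have hδ : 0 < 9 / 128 * (Phi (σ * ε / 8 / (σ * Real.sqrt C)) - 1 / 2) :=
    mul_pos (by norm_num) (sub_pos.2 (half_lt_Phi (by positivity)))
  by_contra hfreq
  obtain ⟨n, hεn, hδn, hmn, hn⟩ := ((not_eventually.1 hfreq).and_eventually
    (((h (σ * ε / 8) (by positivity)).eventually (gt_mem_nhds hδ)).and
      (hm.and (eventually_gt_atTop 0)))).exists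
  have hξη : ε ≤ ξ n * η n := by
    simpa [abs_of_pos (hξ n), abs_of_pos (hη n)] using hεn
  have := le_ptdel_of_sq_div_le (θ := σ * ε / 8) hmn hn (hξ n) (hη n).le (by positivity) hσ (hC n)
    (by nlinarith [mul_le_mul_of_nonneg_left hξη hσ.le])
  linarith

/-- unknown-variance analogue of STATEMENT 0. -/
theorem stmt_3 (ξ η : ℕ → ℝ) (hξ : ∀ n, 0 < ξ n) (hη : ∀ n, 0 < η n)
    (hsup : ∃ C : ℝ, ∀ n : ℕ, ξ n ^ 2 / n ≤ C)
    (k : ℕ → ℕ) (hk : ∀ n, 2 ≤ n → 1 ≤ k n ∧ k n < n)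
    (σ : ℝ) (hσ : 0 < σ) :
    (∀ θ : ℝ, θ ≠ 0 →
        Tendsto (fun n => ptdel n (n - k n) (ξ n) (η n) θ σ) atTop (nhds 0)) ↔
      Tendsto (fun n => ξ n * η n) atTop (nhds 0) := by
  obtain ⟨C, hC⟩ := hsup
  have hm : ∀ᶠ n in atTop, 0 < n - k n :=
    eventually_atTop.2 ⟨2, fun n hn => Nat.sub_pos_of_lt (hk n hn).2⟩
  exact ⟨tendsto_mul_of_tendsto_ptdel hξ hη hC hm hσ,
    fun hξη θ hθ => tendsto_ptdel_of_tendsto_mul hξ (fun n => (hη n).le) hm hθ hσ hξη⟩
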